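/- arXiv:2006.10653 — 4 statements merged into one kernel-verified Lean document; each statement's English description precedes it below -/
import Mathlib

section
/- Let X be a k×n real matrix with k < n, let x_k denote its k-th row, let X_{-k} be X with its k-th row removed, and set P_{-k} = X_{-k}^† X_{-k} (Moore-Penrose pseudoinverse). If x_k^⊤(I - P_{-k})x_k ≠ 0, then (X^⊤X)^† x_k = (I - P_{-k}) x_k / (x_k^⊤ (I - P_{-k}) x_k). -/
open Matrix

/-- `B` is the Moore-Penrose pseudoinverse of `A`. -/
def IsMoorePenrose {m n : Type*} [Fintype m] [Fintype n] (A : Matrix m n ℝ) (B : Matrix n m ℝ) :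
    Prop :=
  A * B * A = A ∧ B * A * B = B ∧ (A * B)ᵀ = A * B ∧ (B * A)ᵀ = B * A

private lemma tmul_self_eq_zero {m n : Type*} [Fintype m] [Fintype n]
    {M : Matrix m n ℝ} (h : Mᵀ * M = 0) : M = 0 := by
  rw [← Matrix.conjTranspose_mul_self_eq_zero (A := M)]
  simpa using h

/-- If `W` satisfies `A W A = A` and `(W A)ᵀ = W A` for `A = Xᵀ X`, then `W A Xᵀ = Xᵀ`. -/
private lemma key_lemma {m n : Type*} [Fintype m] [Fintype n]
    (X : Matrix m n ℝ) (W : Matrix n n ℝ)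
    (h1 : Xᵀ * X * W * (Xᵀ * X) = Xᵀ * X)
    (h4 : (W * (Xᵀ * X))ᵀ = W * (Xᵀ * X)) :
    W * (Xᵀ * X) * Xᵀ = Xᵀ := by
  set A : Matrix n n ℝ := Xᵀ * X with hA
  have hXtX : ∀ (B : Matrix n n ℝ), Xᵀ * (X * B) = A * B := by
    intro B; rw [← Matrix.mul_assoc, ← hA]
  have hh : A * (W * A) = A := by rw [← Matrix.mul_assoc]; exact h1
  have hh' : ∀ (B : Matrix n n ℝ), A * (W * (A * B)) = A * B := by
    intro B
    calc A * (W * (A * B)) = A * (W * A) * B := by simp [Matrix.mul_assoc]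
    _ = A * B := by rw [hh]
  have hzero : (X * (W * A) - X)ᵀ * (X * (W * A) - X) = 0 := by
    have hMt : (X * (W * A) - X)ᵀ = W * A * Xᵀ - Xᵀ := by
      rw [Matrix.transpose_sub, Matrix.transpose_mul, h4]
    rw [hMt]
    simp only [Matrix.sub_mul, Matrix.mul_sub, Matrix.mul_assoc, hXtX, hh', hh]
    abel
  have hM : X * (W * A) = X := by
    have := tmul_self_eq_zero hzero
    exact sub_eq_zero.mp this
  have := congrArg Matrix.transpose hM
  rw [Matrix.transpose_mul, h4] at this
  exact this

/-- Rank-one pseudoinverse update: `(XᵀX)† x_k = (I - P_{-k}) x_k / (x_kᵀ (I - P_{-k}) x_k)`. -/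
theorem stmt0 {k n : ℕ} (hkn : k + 1 < n)
    (X : Matrix (Fin (k + 1)) (Fin n) ℝ)
    (Xm : Matrix (Fin k) (Fin n) ℝ) (hXm : ∀ i j, Xm i j = X i.castSucc j)
    (x : Fin n → ℝ) (hx : x = X (Fin.last k))
    (Xmp : Matrix (Fin n) (Fin k) ℝ) (hXmp : IsMoorePenrose Xm Xmp)
    (Pm : Matrix (Fin n) (Fin n) ℝ) (hPm : Pm = Xmp * Xm)
    (W : Matrix (Fin n) (Fin n) ℝ) (hW : IsMoorePenrose (Xᵀ * X) W)
    (hq : x ⬝ᵥ (1 - Pm).mulVec x ≠ 0) :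
    W.mulVec x = (x ⬝ᵥ (1 - Pm).mulVec x)⁻¹ • (1 - Pm).mulVec x := by
  obtain ⟨h1m, h2m, h3m, h4m⟩ := hXmp
  obtain ⟨h1, h2, h3, h4⟩ := hW
  set q : Fin n → ℝ := (1 - Pm).mulVec x with hqdef
  set c : ℝ := x ⬝ᵥ q with hcdef
  -- Xm annihilates 1 - Pm
  have F0 : Xm * (1 - Pm) = 0 := by
    rw [hPm, Matrix.mul_sub, Matrix.mul_one, ← Matrix.mul_assoc, h1m, sub_self]
  -- X q is supported at the last coordinate
  have F1 : X.mulVec q = Pi.single (Fin.last k) c := by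
    funext i
    refine Fin.lastCases ?_ ?_ i
    · simp [Matrix.mulVec, hcdef, hx, dotProduct]
    · intro j
      have hXmq : Xm.mulVec q = 0 := by
        rw [hqdef, Matrix.mulVec_mulVec, F0, Matrix.zero_mulVec]
      have : (X.mulVec q) j.castSucc = (Xm.mulVec q) j := by
        simp [Matrix.mulVec, dotProduct, hXm]
      rw [this, hXmq]
      simp [Pi.single_eq_of_ne (Fin.castSucc_lt_last j).ne]
  -- (XᵀX) q = c • x
  have F2 : (Xᵀ * X).mulVec q = c • x := by
    rw [← Matrix.mulVec_mulVec, F1, Matrix.mulVec_single]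
    funext j
    simp [hx, mul_comm]
  -- q lies in the row space of X
  have F3 : q = Xᵀ.mulVec (Pi.single (Fin.last k) 1 - Fin.snoc (Xmpᵀ.mulVec x) 0) := by
    have hPmT : Pm = Xmᵀ * Xmpᵀ := by
      rw [hPm, ← h4m, Matrix.transpose_mul]
    have hsnoc : Xᵀ.mulVec (Fin.snoc (Xmpᵀ.mulVec x) 0) = Pm.mulVec x := by
      rw [hPmT, ← Matrix.mulVec_mulVec]
      funext j
      rw [Matrix.mulVec, Matrix.mulVec]
      simp only [dotProduct, Fin.sum_univ_castSucc, Fin.snoc_castSucc, Fin.snoc_last,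
        mul_zero, add_zero]
      exact Finset.sum_congr rfl fun i _ => by simp [Matrix.transpose_apply, hXm]
    rw [Matrix.mulVec_sub, hsnoc, Matrix.mulVec_single]
    funext j
    simp [hqdef, Matrix.sub_mulVec, Matrix.one_mulVec, hx, Matrix.transpose_apply]
  -- assemble
  have hL : W * (Xᵀ * X) * Xᵀ = Xᵀ := key_lemma X W h1 h4
  have hxq : x = c⁻¹ • ((Xᵀ * X).mulVec q) := by
    rw [F2, smul_smul, inv_mul_cancel₀ hq, one_smul]
  calc W.mulVec x = W.mulVec (c⁻¹ • ((Xᵀ * X).mulVec q)) := by rw [← hxq]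
    _ = c⁻¹ • (W.mulVec ((Xᵀ * X).mulVec q)) := Matrix.mulVec_smul _ _ _
    _ = c⁻¹ • ((W * (Xᵀ * X)).mulVec q) := by rw [Matrix.mulVec_mulVec]
    _ = c⁻¹ • ((W * (Xᵀ * X)).mulVec (Xᵀ.mulVec (Pi.single (Fin.last k) 1 - Fin.snoc (Xmpᵀ.mulVec x) 0))) := by rw [← F3]
    _ = c⁻¹ • ((W * (Xᵀ * X) * Xᵀ).mulVec (Pi.single (Fin.last k) 1 - Fin.snoc (Xmpᵀ.mulVec x) 0)) := by rw [Matrix.mulVec_mulVec]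
    _ = c⁻¹ • (Xᵀ.mulVec (Pi.single (Fin.last k) 1 - Fin.snoc (Xmpᵀ.mulVec x) 0)) := by rw [hL]
    _ = c⁻¹ • q := by rw [← F3]
end

section
/- With the same notation, if x_k^⊤(I - P_{-k})x_k ≠ 0 and P = X^† X, then P - P_{-k} = (I - P_{-k}) x_k x_k^⊤ (I - P_{-k}) / (x_k^⊤ (I - P_{-k}) x_k). In particular P - P_{-k} is positive semi-definite of rank at most 1. -/
/-!
Let `y = (I - P_{-k}) x_k` and `q = x_kᵀ y = yᵀ y`, and put `R = P_{-k} + y yᵀ / q`. Then `R` is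
symmetric and fixes every row of `X`: the rows of `X_{-k}` because `y` is orthogonal to them, and
`x_k` because `R x_k = P_{-k} x_k + y`. As `P` is symmetric with columns spanned by the rows of
`X`, this gives `R P = P`. Conversely `P` fixes the rows of `X_{-k}` and `x_k`, hence `P_{-k}` and
`y`, so `P R = R`. Two symmetric matrices with `P R = R` and `R P = P` are equal, since
`P = (R P)ᵀ = P R = R`.
-/

open Matrix

variable {m n : Type*} [Fintype m] [Fintype n]

section CommSemiring

variable {α : Type*} [CommSemiring α]

theorem Matrix.eq_of_isSymm_of_mul_eq {P R : Matrix n n α}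
    (hP : P.IsSymm) (hR : R.IsSymm) (hPR : P * R = R) (hRP : R * P = P) : P = R :=
  calc P = (R * P)ᵀ := by rw [hRP, hP.eq]
    _ = P * R := by rw [transpose_mul, hP.eq, hR.eq]
    _ = R := hPR

theorem Matrix.mulVec_dotProduct_eq_zero {S : Matrix n n α} (hS : S.IsSymm) {v : n → α}
    (hv : S *ᵥ v = 0) (x : n → α) : S *ᵥ x ⬝ᵥ v = 0 := by
  rw [dotProduct_comm, dotProduct_mulVec, ← mulVec_transpose, hS.eq, hv, zero_dotProduct]

theorem Matrix.mulVec_dotProduct_mulVec_self {S : Matrix n n α} (hS : S.IsSymm)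
    (hS2 : IsIdempotentElem S) (x : n → α) : S *ᵥ x ⬝ᵥ S *ᵥ x = x ⬝ᵥ S *ᵥ x := by
  rw [dotProduct_mulVec, ← mulVec_transpose, hS.eq, mulVec_mulVec, hS2.eq, dotProduct_comm]

theorem Matrix.mul_vecMulVec_mul_of_isSymm {S : Matrix n n α} (hS : S.IsSymm) (x : n → α) :
    S * vecMulVec x x * S = vecMulVec (S *ᵥ x) (S *ᵥ x) := by
  rw [mul_vecMulVec, vecMulVec_mul, ← mulVec_transpose, hS.eq]

end CommSemiring

namespace IsMoorePenrose

variable {A : Matrix m n ℝ} {B : Matrix n m ℝ}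

theorem isSymm_proj (h : IsMoorePenrose A B) : (B * A).IsSymm := h.2.2.2

theorem proj_mulVec_row (h : IsMoorePenrose A B) (i : m) : (B * A) *ᵥ A i = A i := by
  rw [← h.isSymm_proj.eq, mulVec_transpose, ← mul_apply_eq_vecMul, ← Matrix.mul_assoc, h.1]

theorem mul_proj_of_mulVec_row (h : IsMoorePenrose A B) {R : Matrix n n ℝ}
    (hR : ∀ i, R *ᵥ A i = A i) : R * (B * A) = B * A := by
  have hAR : A * Rᵀ = A := funext fun i => by rw [mul_apply_eq_vecMul, vecMul_transpose, hR]
  rw [← transpose_transpose (R * _), transpose_mul, h.isSymm_proj.eq, Matrix.mul_assoc, hAR,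
    h.isSymm_proj.eq]

theorem isIdempotentElem_proj (h : IsMoorePenrose A B) : IsIdempotentElem (B * A) :=
  h.mul_proj_of_mulVec_row h.proj_mulVec_row

end IsMoorePenrose

section RankOneUpdate

variable {α : Type*} [Field α] [DecidableEq n]

/-- For an orthogonal projection `Pm` and `xᵀ (1 - Pm) x ≠ 0`, the orthogonal projection onto
`range Pm + span {x}`. -/
def projUpdate (Pm : Matrix n n α) (x : n → α) : Matrix n n α :=
  Pm + (x ⬝ᵥ (1 - Pm) *ᵥ x)⁻¹ • vecMulVec ((1 - Pm) *ᵥ x) ((1 - Pm) *ᵥ x)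

variable {Pm : Matrix n n α} {x : n → α}

theorem projUpdate_sub_self : projUpdate Pm x - Pm =
    (x ⬝ᵥ (1 - Pm) *ᵥ x)⁻¹ • vecMulVec ((1 - Pm) *ᵥ x) ((1 - Pm) *ᵥ x) :=
  add_sub_cancel_left _ _

theorem isSymm_projUpdate (hPm : Pm.IsSymm) : (projUpdate Pm x).IsSymm :=
  hPm.add (IsSymm.smul (transpose_vecMulVec _ _) _)

theorem projUpdate_mulVec_self (hq : x ⬝ᵥ (1 - Pm) *ᵥ x ≠ 0) : projUpdate Pm x *ᵥ x = x := by
  rw [projUpdate, add_mulVec, smul_mulVec, vecMulVec_mulVec, op_smul_eq_smul,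
    dotProduct_comm ((1 - Pm) *ᵥ x), smul_smul, inv_mul_cancel₀ hq, one_smul, sub_mulVec,
    one_mulVec, add_sub_cancel]

theorem projUpdate_mulVec_of_mulVec_eq (hPm : Pm.IsSymm) {v : n → α} (hv : Pm *ᵥ v = v) :
    projUpdate Pm x *ᵥ v = v := by
  have hSv : (1 - Pm) *ᵥ v = 0 := by rw [sub_mulVec, one_mulVec, hv, sub_self]
  rw [projUpdate, add_mulVec, smul_mulVec, vecMulVec_mulVec,
    mulVec_dotProduct_eq_zero (isSymm_one.sub hPm) hSv, MulOpposite.op_zero, zero_smul,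
    smul_zero, add_zero, hv]

theorem mul_projUpdate {P : Matrix n n α} (hPPm : P * Pm = Pm) (hPx : P *ᵥ x = x) :
    P * projUpdate Pm x = projUpdate Pm x := by
  have hPy : P *ᵥ ((1 - Pm) *ᵥ x) = (1 - Pm) *ᵥ x := by
    rw [mulVec_mulVec, Matrix.mul_sub, Matrix.mul_one, hPPm, sub_mulVec, sub_mulVec, hPx,
      one_mulVec]
  rw [projUpdate, Matrix.mul_add, hPPm, Matrix.mul_smul, mul_vecMulVec, hPy]

end RankOneUpdate

theorem Matrix.posSemidef_smul_vecMulVec_self {c : ℝ} (hc : 0 ≤ c) (y : n → ℝ) :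
    (c • vecMulVec y y).PosSemidef := by
  simpa using (posSemidef_vecMulVec_self_star y).smul hc

theorem stmt1_general {k n : ℕ}
    (X : Matrix (Fin (k + 1)) (Fin n) ℝ)
    (Xm : Matrix (Fin k) (Fin n) ℝ) (hXm : ∀ i j, Xm i j = X i.castSucc j)
    (x : Fin n → ℝ) (hx : x = X (Fin.last k))
    (Xp : Matrix (Fin n) (Fin (k + 1)) ℝ) (hXp : IsMoorePenrose X Xp)
    (Xmp : Matrix (Fin n) (Fin k) ℝ) (hXmp : IsMoorePenrose Xm Xmp)
    (P : Matrix (Fin n) (Fin n) ℝ) (hP : P = Xp * X)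
    (Pm : Matrix (Fin n) (Fin n) ℝ) (hPm : Pm = Xmp * Xm)
    (hq : x ⬝ᵥ (1 - Pm).mulVec x ≠ 0) :
    P - Pm = (x ⬝ᵥ (1 - Pm).mulVec x)⁻¹ • ((1 - Pm) * vecMulVec x x * (1 - Pm)) ∧
      (P - Pm).PosSemidef ∧ (P - Pm).rank ≤ 1 := by
  subst hP hPm hx
  have hXmRow : ∀ i, Xm i = X i.castSucc := fun i => funext (hXm i)
  have hPPm : Xp * X * (Xmp * Xm) = Xmp * Xm :=
    hXmp.mul_proj_of_mulVec_row fun i => by rw [hXmRow]; exact hXp.proj_mulVec_row _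
  have hRP : projUpdate (Xmp * Xm) (X (Fin.last k)) * (Xp * X) = Xp * X :=
    hXp.mul_proj_of_mulVec_row <| Fin.lastCases (projUpdate_mulVec_self hq) fun i => by
      rw [← hXmRow]
      exact projUpdate_mulVec_of_mulVec_eq hXmp.isSymm_proj (hXmp.proj_mulVec_row i)
  have hPR := mul_projUpdate hPPm (hXp.proj_mulVec_row (Fin.last k))
  have hS : (1 - Xmp * Xm).IsSymm := isSymm_one.sub hXmp.isSymm_proj
  have hq0 : 0 ≤ X (Fin.last k) ⬝ᵥ (1 - Xmp * Xm) *ᵥ X (Fin.last k) := by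
    rw [← mulVec_dotProduct_mulVec_self hS hXmp.isIdempotentElem_proj.one_sub]
    exact dotProduct_self_star_nonneg _
  rw [eq_of_isSymm_of_mul_eq hXp.isSymm_proj (isSymm_projUpdate hXmp.isSymm_proj) hPR hRP,
    projUpdate_sub_self, mul_vecMulVec_mul_of_isSymm hS]
  refine ⟨rfl, posSemidef_smul_vecMulVec_self (inv_nonneg.2 hq0) _, ?_⟩
  rw [← smul_vecMulVec]
  exact rank_vecMulVec_le _ _

/-- Rank-one projection update: `P - P_{-k} = (I-P_{-k}) x_k x_kᵀ (I-P_{-k}) / (x_kᵀ(I-P_{-k})x_k)`,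
a positive semi-definite matrix of rank at most 1. -/
theorem stmt1 {k n : ℕ} (hkn : k + 1 < n)
    (X : Matrix (Fin (k + 1)) (Fin n) ℝ)
    (Xm : Matrix (Fin k) (Fin n) ℝ) (hXm : ∀ i j, Xm i j = X i.castSucc j)
    (x : Fin n → ℝ) (hx : x = X (Fin.last k))
    (Xp : Matrix (Fin n) (Fin (k + 1)) ℝ) (hXp : IsMoorePenrose X Xp)
    (Xmp : Matrix (Fin n) (Fin k) ℝ) (hXmp : IsMoorePenrose Xm Xmp)
    (P : Matrix (Fin n) (Fin n) ℝ) (hP : P = Xp * X)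
    (Pm : Matrix (Fin n) (Fin n) ℝ) (hPm : Pm = Xmp * Xm)
    (hq : x ⬝ᵥ (1 - Pm).mulVec x ≠ 0) :
    P - Pm = (x ⬝ᵥ (1 - Pm).mulVec x)⁻¹ • ((1 - Pm) * vecMulVec x x * (1 - Pm)) ∧
      (P - Pm).PosSemidef ∧ (P - Pm).rank ≤ 1 :=
  stmt1_general X Xm hXm x hx Xp hXp Xmp hXmp P hP Pm hPm hq
end

section
/- Let Σ be an n×n positive semi-definite matrix with operator norm ‖Σ‖ = 1, stable rank r = tr(Σ), and let γ > 0 satisfy tr((γΣ + I)^{-1}) = n - k for some integer 0 < k < r. Then γ ≤ k/(r - k). -/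
open Matrix
open scoped Matrix.Norms.L2Operator

/-!
Diagonalize `Σ` with eigenvalues `λᵢ`. Since `Σ ⪰ 0` and `‖Σ‖ = 1`, every `λᵢ ∈ [0, 1]`, and the
normalization reads `k = ∑ᵢ (1 - (γλᵢ + 1)⁻¹) = ∑ᵢ γλᵢ / (γλᵢ + 1)`. Bounding each denominator by
`γ + 1` gives `k ≥ γ r / (γ + 1)`, which rearranges to `γ ≤ k / (r - k)`.
-/

namespace Matrix

variable {n : Type*} [Fintype n] [DecidableEq n]

theorem trace_inv_unitary_conj {α : Type*} [CommRing α] [StarRing α] {U : Matrix n n α}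
    (hU : U ∈ unitary (Matrix n n α)) (B : Matrix n n α) :
    (U * B * star U)⁻¹.trace = B⁻¹.trace := by
  rw [mul_inv_rev, mul_inv_rev, inv_eq_left_inv (Unitary.mul_star_self_of_mem hU),
    inv_eq_left_inv (Unitary.star_mul_self_of_mem hU), ← mul_assoc, trace_mul_cycle,
    Unitary.star_mul_self_of_mem hU, one_mul]

theorem trace_inv_diagonal {α : Type*} [Field α] {v : n → α} (hv : ∀ i, v i ≠ 0) :
    (diagonal v)⁻¹.trace = ∑ i, (v i)⁻¹ := by
  have hmul : diagonal v * diagonal (fun i => (v i)⁻¹) = 1 := by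
    rw [diagonal_mul_diagonal, ← diagonal_one]
    exact congrArg diagonal (funext fun i => mul_inv_cancel₀ (hv i))
  rw [inv_eq_right_inv hmul, trace_diagonal]

namespace IsHermitian

variable {𝕜 : Type*} [RCLike 𝕜] {A : Matrix n n 𝕜}

theorem smul_add_one_eq_conj_diagonal (hA : A.IsHermitian) (c : ℝ) :
    c • A + 1 = (hA.eigenvectorUnitary : Matrix n n 𝕜) *
      diagonal (fun i => ((c * hA.eigenvalues i + 1 : ℝ) : 𝕜)) *
        star (hA.eigenvectorUnitary : Matrix n n 𝕜) := by
  have hdiag : c • diagonal (RCLike.ofReal ∘ hA.eigenvalues) + 1 =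
      diagonal (fun i => ((c * hA.eigenvalues i + 1 : ℝ) : 𝕜)) := by
    rw [← diagonal_one, ← diagonal_smul, diagonal_add]
    congr 1 with i
    simp [RCLike.real_smul_eq_coe_mul]
  rw [← hdiag, ← Unitary.conjStarAlgAut_apply (S := ℝ), map_add, map_smul, map_one,
    Unitary.conjStarAlgAut_apply, ← Unitary.conjStarAlgAut_apply (S := 𝕜), ← hA.spectral_theorem]

theorem trace_inv_smul_add_one (hA : A.IsHermitian) {c : ℝ}
    (hc : ∀ i, c * hA.eigenvalues i + 1 ≠ 0) :
    (c • A + 1)⁻¹.trace = ∑ i, (((c * hA.eigenvalues i + 1)⁻¹ : ℝ) : 𝕜) := by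
  rw [hA.smul_add_one_eq_conj_diagonal, trace_inv_unitary_conj hA.eigenvectorUnitary.2,
    trace_inv_diagonal fun i => RCLike.ofReal_ne_zero.mpr (hc i)]
  simp

theorem abs_eigenvalues_le_l2_opNorm (hA : A.IsHermitian) (i : n) :
    |hA.eigenvalues i| ≤ ‖A‖ := by
  have h := l2_opNorm_mulVec A (hA.eigenvectorBasis i)
  rw [hA.mulVec_eigenvectorBasis] at h
  simpa [norm_smul, hA.eigenvectorBasis.orthonormal.1 i] using h

end IsHermitian

end Matrix

theorem div_add_one_mul_le_one_sub_inv {c x : ℝ} (hc : 0 ≤ c) (hx₀ : 0 ≤ x) (hx₁ : x ≤ 1) :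
    c / (c + 1) * x ≤ 1 - (c * x + 1)⁻¹ := by
  have hcx : 0 ≤ c * x := mul_nonneg hc hx₀
  calc c / (c + 1) * x = c * x / (c + 1) := div_mul_eq_mul_div c (c + 1) x
    _ ≤ c * x / (c * x + 1) := by gcongr; nlinarith
    _ = 1 - (c * x + 1)⁻¹ := by field_simp; ring

theorem stmt4_general {n k : ℕ}
    (S : Matrix (Fin n) (Fin n) ℝ) (hS : S.PosSemidef) (hnorm : ‖S‖ = 1)
    (hkr : (k : ℝ) < S.trace)
    (γ : ℝ) (hγ : 0 < γ) (hdef : (γ • S + 1)⁻¹.trace = (n : ℝ) - k) :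
    γ ≤ (k : ℝ) / (S.trace - k) := by
  set μ := hS.1.eigenvalues
  have hμ₀ : ∀ i, 0 ≤ μ i := hS.eigenvalues_nonneg
  have hμ₁ : ∀ i, μ i ≤ 1 := fun i =>
    hnorm ▸ (le_abs_self _).trans (hS.1.abs_eigenvalues_le_l2_opNorm i)
  have hsum : ∑ i, (γ * μ i + 1)⁻¹ = n - k := by
    rw [← hdef, hS.1.trace_inv_smul_add_one fun i => by nlinarith [hμ₀ i]]
    simp [μ]
  have hkey : γ / (γ + 1) * S.trace ≤ k := calc
    γ / (γ + 1) * S.trace = ∑ i, γ / (γ + 1) * μ i := by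
      rw [hS.1.trace_eq_sum_eigenvalues, Finset.mul_sum]; simp [μ]
    _ ≤ ∑ i, (1 - (γ * μ i + 1)⁻¹) := Finset.sum_le_sum fun i _ =>
      div_add_one_mul_le_one_sub_inv hγ.le (hμ₀ i) (hμ₁ i)
    _ = k := by rw [Finset.sum_sub_distrib, hsum]; simp
  rw [le_div_iff₀ (sub_pos.2 hkr)]
  rw [div_mul_eq_mul_div, div_le_iff₀ (by linarith)] at hkey
  linarith

/-- If `‖Σ‖ = 1`, `r = tr(Σ)`, `0 < k < r` and `γ > 0` satisfies `tr((γΣ+I)⁻¹) = n - k`, then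
`γ ≤ k/(r-k)`. -/
theorem stmt4 {n k : ℕ} (hk : 0 < k)
    (S : Matrix (Fin n) (Fin n) ℝ) (hS : S.PosSemidef) (hnorm : ‖S‖ = 1)
    (hkr : (k : ℝ) < S.trace)
    (γ : ℝ) (hγ : 0 < γ) (hdef : (γ • S + 1)⁻¹.trace = (n : ℝ) - k) :
    γ ≤ (k : ℝ) / (S.trace - k) :=
  stmt4_general S hS hnorm hkr γ hγ hdef
end

section
/- Suppose the squared singular values of A satisfy σ_i² = C·α^{i-1} for i ≥ 1 with α ∈ (0,1) and C > 0, and let γ(k) be the unique positive solution of Σ_{i≥1} γσ_i²/(γσ_i²+1) = k. Then γ(k) is strictly increasing in k, and the associated error expression k/γ(k) is strictly decreasing in k. -/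
/-!
Write `s i = C αⁱ` and `d(γ) = ∑ γ sᵢ/(γ sᵢ + 1)`, so that `d(γ(k)) = k`. Each term of `d` is
increasing in `γ`, hence `d` is monotone and `γ(k)` must increase with `k`. Dividing the defining
equation by `γ` gives `k/γ(k) = ∑ sᵢ/(γ(k) sᵢ + 1)`, whose terms are strictly decreasing in `γ`.
-/

section EffectiveDimension

variable {ι : Type*} {s : ι → ℝ}

noncomputable def effectiveDimension (s : ι → ℝ) (γ : ℝ) : ℝ :=
  ∑' i, γ * s i / (γ * s i + 1)

lemma div_add_one_le_div_add_one {x y : ℝ} (hx : 0 ≤ x) (hxy : x ≤ y) :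
    x / (x + 1) ≤ y / (y + 1) := by
  rw [div_le_div_iff₀ (by linarith) (by linarith)]
  linarith

lemma div_mul_add_one_lt_div_mul_add_one {a b t : ℝ} (ht : 0 < t) (ha : 0 ≤ a) (hab : a < b) :
    t / (b * t + 1) < t / (a * t + 1) :=
  div_lt_div_of_pos_left ht (by positivity) (by gcongr)

lemma summable_of_tsum_ne_zero {f : ι → ℝ} (h : ∑' i, f i ≠ 0) : Summable f := by
  by_contra hf
  exact h (tsum_eq_zero_of_not_summable hf)

lemma effectiveDimension_le_of_le (hs : ∀ i, 0 ≤ s i) {a b : ℝ} (ha : 0 ≤ a) (hab : a ≤ b)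
    (hb : Summable fun i => b * s i / (b * s i + 1)) :
    effectiveDimension s a ≤ effectiveDimension s b := by
  have hle : ∀ i, a * s i / (a * s i + 1) ≤ b * s i / (b * s i + 1) := fun i =>
    div_add_one_le_div_add_one (mul_nonneg ha (hs i)) (mul_le_mul_of_nonneg_right hab (hs i))
  have h0 : ∀ i, 0 ≤ a * s i / (a * s i + 1) := fun i => by
    have := mul_nonneg ha (hs i)
    positivity
  exact Summable.tsum_le_tsum hle (.of_nonneg_of_le h0 hle hb) hb

lemma effectiveDimension_div {γ : ℝ} (hγ : γ ≠ 0) :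
    effectiveDimension s γ / γ = ∑' i, s i / (γ * s i + 1) := by
  rw [effectiveDimension, ← tsum_div_const]
  congr 1 with i
  rw [mul_div_assoc, mul_div_cancel_left₀ _ hγ]

lemma effectiveDimension_div_lt [Nonempty ι] (hs : ∀ i, 0 < s i) {a b : ℝ} (ha : 0 < a)
    (hab : a < b) (hsum : Summable fun i => a * s i / (a * s i + 1)) :
    effectiveDimension s b / b < effectiveDimension s a / a := by
  obtain ⟨i₀⟩ := ‹Nonempty ι›
  rw [effectiveDimension_div (ha.trans hab).ne', effectiveDimension_div ha.ne']
  have hsum' : Summable fun i => s i / (a * s i + 1) :=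
    (hsum.div_const a).congr fun i => by rw [mul_div_assoc, mul_div_cancel_left₀ _ ha.ne']
  have hlt : ∀ i, s i / (b * s i + 1) < s i / (a * s i + 1) := fun i =>
    div_mul_add_one_lt_div_mul_add_one (hs i) ha.le hab
  have h0 : ∀ i, 0 ≤ s i / (b * s i + 1) := fun i => by
    have := hs i
    have := (ha.trans hab).le
    positivity
  exact Summable.tsum_lt_tsum (fun i => (hlt i).le) (hlt i₀)
    (.of_nonneg_of_le h0 (fun i => (hlt i).le) hsum') hsum'

end EffectiveDimension

/-- Under exponential spectral decay `σ_i² = C·αⁱ`, the solution `γ(k)` of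
`∑_{i} γσ_i²/(γσ_i²+1) = k` is strictly increasing in `k`, and the error expression
`k/γ(k)` is strictly decreasing in `k`. -/
theorem stmt13 (C α : ℝ) (hC : 0 < C) (hα : α ∈ Set.Ioo (0 : ℝ) 1)
    (γ : ℝ → ℝ) (hγpos : ∀ k : ℝ, 0 < k → 0 < γ k)
    (hγ : ∀ k : ℝ, 0 < k →
      ∑' i : ℕ, γ k * (C * α ^ i) / (γ k * (C * α ^ i) + 1) = k) :
    ∀ k₁ k₂ : ℝ, 0 < k₁ → k₁ < k₂ → γ k₁ < γ k₂ ∧ k₂ / γ k₂ < k₁ / γ k₁ := by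
  intro k₁ k₂ hk₁ hk
  have hk₂ : 0 < k₂ := hk₁.trans hk
  have hs : ∀ i : ℕ, 0 < C * α ^ i := fun i => mul_pos hC (pow_pos hα.1 i)
  have hd₁ : effectiveDimension (fun i => C * α ^ i) (γ k₁) = k₁ := hγ k₁ hk₁
  have hd₂ : effectiveDimension (fun i => C * α ^ i) (γ k₂) = k₂ := hγ k₂ hk₂
  have hsum := summable_of_tsum_ne_zero (hγ k₁ hk₁ ▸ hk₁.ne')
  have hγlt : γ k₁ < γ k₂ := by
    by_contra! hle
    have := effectiveDimension_le_of_le (fun i => (hs i).le) (hγpos k₂ hk₂).le hle hsum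
    linarith
  refine ⟨hγlt, ?_⟩
  simpa only [hd₁, hd₂] using effectiveDimension_div_lt hs (hγpos k₁ hk₁) hγlt hsum
end
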